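/- For the damped harmonic oscillator u'' = -α u' - λ u in the underdamped case α^2 < 4λ, the function E(u,u1) = (1/2) exp((α/ω) arctan((α u1 + 2λ u)/(2ω u1))) · (α u u1 + u1^2 + λ u^2), with ω = (1/2)√(4λ - α^2), satisfies the PDE u1 E_u - (α u1 + λ u) E_{u1} = 0 on the region u1 ≠ 0, α u u1 + u1^2 + λ u^2 > 0. In particular, E is constant along solutions of the ODE. -/

import Mathlib

open Real

/-!
With `Q = α u v + v² + λ u²` and `θ = arctan ((α v + 2 λ u) / (2 ω v))`, one has
`1 + tan² θ = λ Q / (ω² v²)`, hence `dθ = ω (v du - u dv) / Q`. Consequently the differential of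
`E = e^{(α/ω) θ} Q / 2` is `e^{(α/ω) θ} ((α v + λ u) du + v dv)`, which annihilates the vector field
`(v, -(α v + λ u))` of the oscillator.
-/

noncomputable def dampedPhase (α lam ω u v : ℝ) : ℝ :=
  arctan ((α * v + 2 * lam * u) / (2 * ω * v))

noncomputable def dampedEnergy (α lam ω u v : ℝ) : ℝ :=
  exp ((α / ω) * dampedPhase α lam ω u v) / 2 * (α * u * v + v ^ 2 + lam * u ^ 2)

section

variable {α lam ω : ℝ}

theorem hasDerivAt_quadForm_comp {f g : ℝ → ℝ} {df dg x : ℝ}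
    (hf : HasDerivAt f df x) (hg : HasDerivAt g dg x) :
    HasDerivAt (fun t => α * f t * g t + g t ^ 2 + lam * f t ^ 2)
      ((α * g x + 2 * lam * f x) * df + (α * f x + 2 * g x) * dg) x := by
  refine ((((hf.const_mul α).mul hg).add (hg.pow 2)).add ((hf.pow 2).const_mul lam)).congr_deriv ?_
  norm_num
  ring

theorem quadForm_pos (hω : 4 * ω ^ 2 = 4 * lam - α ^ 2) (hω0 : ω ≠ 0) {u v : ℝ} (hv : v ≠ 0) :
    0 < α * u * v + v ^ 2 + lam * u ^ 2 := by
  have hω2 : 0 < ω ^ 2 := by positivity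
  rcases eq_or_ne u 0 with rfl | hu
  · simpa using sq_pos_of_ne_zero hv
  · have : 0 < u ^ 2 := by positivity
    nlinarith [sq_nonneg (2 * v + α * u)]

theorem one_add_sq_phaseRatio (hω : 4 * ω ^ 2 = 4 * lam - α ^ 2) (hω0 : ω ≠ 0) {u v : ℝ}
    (hv : v ≠ 0) :
    1 + ((α * v + 2 * lam * u) / (2 * ω * v)) ^ 2
      = lam * (α * u * v + v ^ 2 + lam * u ^ 2) / (ω ^ 2 * v ^ 2) := by
  field_simp
  linear_combination (v ^ 2) * hω

theorem hasDerivAt_dampedPhase_comp (hω : 4 * ω ^ 2 = 4 * lam - α ^ 2) (hω0 : ω ≠ 0)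
    {f g : ℝ → ℝ} {df dg x : ℝ}
    (hf : HasDerivAt f df x) (hg : HasDerivAt g dg x) (hg0 : g x ≠ 0) :
    HasDerivAt (fun t => dampedPhase α lam ω (f t) (g t))
      (ω * (g x * df - f x * dg) / (α * f x * g x + g x ^ 2 + lam * f x ^ 2)) x := by
  have hden : 2 * ω * g x ≠ 0 := by simp [hω0, hg0]
  have hQ := quadForm_pos hω hω0 (u := f x) hg0
  have hlam : 0 < lam := by nlinarith [sq_nonneg α, sq_pos_of_ne_zero hω0]
  refine ((((hg.const_mul α).add (hf.const_mul (2 * lam))).div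
    (hg.const_mul (2 * ω)) hden).arctan).congr_deriv ?_
  simp only [Pi.add_apply, Pi.div_apply]
  rw [one_add_sq_phaseRatio hω hω0 hg0]
  field_simp
  ring

theorem hasDerivAt_dampedEnergy_comp (hω : 4 * ω ^ 2 = 4 * lam - α ^ 2) (hω0 : ω ≠ 0)
    {f g : ℝ → ℝ} {df dg x : ℝ}
    (hf : HasDerivAt f df x) (hg : HasDerivAt g dg x) (hg0 : g x ≠ 0) :
    HasDerivAt (fun t => dampedEnergy α lam ω (f t) (g t))
      (exp ((α / ω) * dampedPhase α lam ω (f x) (g x))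
        * ((α * g x + lam * f x) * df + g x * dg)) x := by
  set Q := α * f x * g x + g x ^ 2 + lam * f x ^ 2
  have hQ : Q ≠ 0 := (quadForm_pos hω hω0 hg0).ne'
  have hcancel : α / ω * (ω * (g x * df - f x * dg) / Q) * Q = α * (g x * df - f x * dg) := by
    field_simp
  refine ((((hasDerivAt_dampedPhase_comp hω hω0 hf hg hg0).const_mul (α / ω)).exp.div_const 2).mul
    (hasDerivAt_quadForm_comp hf hg)).congr_deriv ?_
  linear_combination exp ((α / ω) * dampedPhase α lam ω (f x) (g x)) / 2 * hcancel

theorem hasDerivAt_dampedEnergy_fst (hω : 4 * ω ^ 2 = 4 * lam - α ^ 2) (hω0 : ω ≠ 0)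
    {u v : ℝ} (hv : v ≠ 0) :
    HasDerivAt (fun u => dampedEnergy α lam ω u v)
      (exp ((α / ω) * dampedPhase α lam ω u v) * (α * v + lam * u)) u := by
  simpa using hasDerivAt_dampedEnergy_comp hω hω0 (hasDerivAt_id u) (hasDerivAt_const u v) hv

theorem hasDerivAt_dampedEnergy_snd (hω : 4 * ω ^ 2 = 4 * lam - α ^ 2) (hω0 : ω ≠ 0)
    {u v : ℝ} (hv : v ≠ 0) :
    HasDerivAt (fun v => dampedEnergy α lam ω u v)
      (exp ((α / ω) * dampedPhase α lam ω u v) * v) v := by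
  simpa using hasDerivAt_dampedEnergy_comp hω hω0 (hasDerivAt_const v u) (hasDerivAt_id v) hv

end

/-- for the underdamped oscillator u'' = -α u' - λ u (α² < 4λ), the
function E(u,u1) = (1/2) e^{(α/ω) arctan((α u1 + 2λ u)/(2ω u1))}(α u u1 + u1² + λ u²),
ω = (1/2)√(4λ-α²), satisfies u1 E_u - (α u1 + λ u) E_{u1} = 0 on
{u1 ≠ 0, α u u1 + u1² + λ u² > 0}; in particular E is constant along solutions. -/
theorem damped_oscillator_energy (α lam : ℝ) (h : α ^ 2 < 4 * lam) :
    let ω : ℝ := Real.sqrt (4 * lam - α ^ 2) / 2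
    let E : ℝ → ℝ → ℝ := fun u u1 =>
      Real.exp ((α / ω) * Real.arctan ((α * u1 + 2 * lam * u) / (2 * ω * u1))) / 2
        * (α * u * u1 + u1 ^ 2 + lam * u ^ 2)
    (∀ u u1 : ℝ, u1 ≠ 0 → 0 < α * u * u1 + u1 ^ 2 + lam * u ^ 2 →
        u1 * deriv (fun t => E t u1) u
          - (α * u1 + lam * u) * deriv (fun w => E u w) u1 = 0) ∧
    (∀ f f' : ℝ → ℝ, (∀ x, HasDerivAt f (f' x) x) →
        (∀ x, HasDerivAt f' (-α * f' x - lam * f x) x) →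
        ∀ x : ℝ, f' x ≠ 0 →
          0 < α * f x * f' x + (f' x) ^ 2 + lam * (f x) ^ 2 →
          HasDerivAt (fun t => E (f t) (f' t)) 0 x) := by
  intro ω E
  have hω : 4 * ω ^ 2 = 4 * lam - α ^ 2 := by
    simp only [ω, div_pow, Real.sq_sqrt (by linarith : 0 ≤ 4 * lam - α ^ 2)]
    ring
  have hω0 : ω ≠ 0 := by positivity
  refine ⟨fun u v hv _ => ?_, fun f f' hf hf' x hx _ => ?_⟩
  · have hu : HasDerivAt (fun t => E t v) _ u := hasDerivAt_dampedEnergy_fst hω hω0 hv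
    have hv' : HasDerivAt (fun w => E u w) _ v := hasDerivAt_dampedEnergy_snd hω hω0 hv
    rw [hu.deriv, hv'.deriv]
    ring
  · refine (hasDerivAt_dampedEnergy_comp hω hω0 (hf x) (hf' x) hx).congr_deriv ?_
    ring
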